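/- arXiv:2208.10055 — 5 statements merged into one kernel-verified Lean document; each statement's English description precedes it below -/
import Mathlib

section
/- Let f: ℝ^m → ℝ^n be a polynomial map and γ: [0,1] → ℝ^n an embedding such that the restriction f: f^{-1}(γ((0,1])) → γ((0,1]) is a locally trivial fibration. Let g: S^i × (0,1] → f^{-1}(γ((0,1])) be a trivial emerging i-cycle, with triviality witnessed by ε > 0 and a continuous fibered map ḡ: S^i × [0,ε] → f^{-1}(γ([0,ε])) (f(ḡ(x,s)) = γ(s)) such that g_s := g(·,s) and ḡ_s := ḡ(·,s) are homotopic in f^{-1}(γ(s)) for each s ∈ (0,ε]. Then there exist a real number ε' with 0 < ε' < ε and a continuous fibered map g̃: S^i × [0,1] → f^{-1}(γ([0,1])) (f(g̃(x,s)) = γ(s)) such that g̃(·,s) = ḡ(·,s) for all s ∈ [0,ε'] and g̃(·,s) = g(·,s) for all s ∈ [ε,1]. -/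
open scoped unitInterval
open Set Filter Topology Metric

noncomputable section

/-! ### Cubes and relative homotopy groups -/

/-- The `n`-dimensional unit cube `I^n = [0,1]^n`. -/
abbrev Cube (n : ℕ) := Fin n → I

/-- The subset `J_{i+1} = ∂ I^{i+1} ∖ (Int I^i × {0})` of the cube `I^{i+1}`;
the last coordinate plays the role of the distinguished (base-face) coordinate. -/
def JSet (i : ℕ) : Set (Cube (i + 1)) :=
  {p | (∃ j, p j = 0 ∨ p j = 1) ∧
    ¬(p (Fin.last i) = 0 ∧ ∀ j : Fin i, p j.castSucc ≠ 0 ∧ p j.castSucc ≠ 1)}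

/-- A continuous map `h : I^{i+1} → A` with `h(I^i × {0}) ⊆ B` and `h(J_{i+1}) = {x0}`,
i.e. the maps representing elements of the relative homotopy group `π_{i+1}(A, B, x0)`. -/
structure IsRelMap {X : Type*} [TopologicalSpace X] (i : ℕ) (A B : Set X) (x0 : X)
    (h : Cube (i + 1) → X) : Prop where
  continuous : Continuous h
  mem_total : ∀ p, h p ∈ A
  mem_base : ∀ p : Cube (i + 1), p (Fin.last i) = 0 → h p ∈ B
  eq_base_pt : ∀ p ∈ JSet i, h p = x0

/-- Homotopy of two representing maps through maps of the same form. -/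
def RelHomotopic {X : Type*} [TopologicalSpace X] (i : ℕ) (A B : Set X) (x0 : X)
    (h₀ h₁ : Cube (i + 1) → X) : Prop :=
  ∃ H : Cube (i + 1) × I → X, Continuous H ∧
    (∀ τ : I, IsRelMap i A B x0 fun p => H (p, τ)) ∧
    (∀ p, H (p, 0) = h₀ p) ∧ ∀ p, H (p, 1) = h₁ p

/-- `π_{i+1}(A, B, x0) = 1`: every representing map is homotopic, through maps of the same
form, to a map with image contained in `B`. -/
def RelPiTrivial {X : Type*} [TopologicalSpace X] (i : ℕ) (A B : Set X) (x0 : X) : Prop :=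
  ∀ h : Cube (i + 1) → X, IsRelMap i A B x0 h →
    ∃ h' : Cube (i + 1) → X, IsRelMap i A B x0 h' ∧ (∀ p, h' p ∈ B) ∧
      RelHomotopic i A B x0 h h'

/-- The set of homotopy classes forming the relative homotopy group `π_{i+1}(A, B, x0)`. -/
def RelPi {X : Type*} [TopologicalSpace X] (i : ℕ) (A B : Set X) (x0 : X) : Type _ :=
  Quot fun h₁ h₂ : {h : Cube (i + 1) → X // IsRelMap i A B x0 h} =>
    RelHomotopic i A B x0 h₁.1 h₂.1

theorem IsRelMap.mono {X : Type*} [TopologicalSpace X] {i : ℕ} {A A' B B' : Set X} {x0 : X}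
    {h : Cube (i + 1) → X} (hh : IsRelMap i A B x0 h) (hA : A ⊆ A') (hB : B ⊆ B') :
    IsRelMap i A' B' x0 h :=
  ⟨hh.continuous, fun p => hA (hh.mem_total p), fun p hp => hB (hh.mem_base p hp),
    hh.eq_base_pt⟩

theorem RelHomotopic.mono {X : Type*} [TopologicalSpace X] {i : ℕ} {A A' B B' : Set X}
    {x0 : X} {h₀ h₁ : Cube (i + 1) → X} (hr : RelHomotopic i A B x0 h₀ h₁)
    (hA : A ⊆ A') (hB : B ⊆ B') : RelHomotopic i A' B' x0 h₀ h₁ := by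
  obtain ⟨H, hc, hsl, h0, h1⟩ := hr
  exact ⟨H, hc, fun τ => (hsl τ).mono hA hB, h0, h1⟩

/-- The map of relative homotopy groups induced by an inclusion of pairs `(A,B) ⊆ (A',B')`. -/
def RelPi.incl {X : Type*} [TopologicalSpace X] {i : ℕ} {A A' B B' : Set X} {x0 : X}
    (hA : A ⊆ A') (hB : B ⊆ B') : RelPi i A B x0 → RelPi i A' B' x0 :=
  Quot.map (fun h => ⟨h.1, h.2.mono hA hB⟩) fun _ _ hr => hr.mono hA hB

/-! ### Serre fibrations, locally trivial fibrations, s-arcs -/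

/-- A continuous surjection `p : E → B` is a Serre fibration if it has the homotopy lifting
property with respect to all finite-dimensional cubes. -/
def IsSerreFibration {E B : Type*} [TopologicalSpace E] [TopologicalSpace B]
    (p : E → B) : Prop :=
  Continuous p ∧ Function.Surjective p ∧
    ∀ (k : ℕ) (H : Cube k × I → B) (h : Cube k → E),
      Continuous H → Continuous h → (∀ q, p (h q) = H (q, 0)) →
      ∃ G : Cube k × I → E, Continuous G ∧ (∀ q, p (G q) = H q) ∧ ∀ q, G (q, 0) = h q

/-- `f` is a locally trivial fibration over `S`: every `t ∈ S` has a neighborhood `V ∩ S`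
in `S` such that `f ⁻¹' (V ∩ S)` is homeomorphic to `(V ∩ S) × f ⁻¹' {t}` over `f`. -/
def IsLocTrivOn {E B : Type*} [TopologicalSpace E] [TopologicalSpace B]
    (f : E → B) (S : Set B) : Prop :=
  ∀ t ∈ S, ∃ V : Set B, IsOpen V ∧ t ∈ V ∧
    ∃ φ : ↥(f ⁻¹' (V ∩ S)) ≃ₜ ↥(V ∩ S) × ↥(f ⁻¹' {t}), ∀ x, ((φ x).1 : B) = f (x : E)

/-- `δ` is an s-arc on `S` at `t0`: the image of an embedding `γ : [0,1] → B` with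
`γ 0 = t0` and `γ((0,1]) ⊆ S`. -/
def IsSArc {B : Type*} [TopologicalSpace B] (S : Set B) (t0 : B) (δ : Set B) : Prop :=
  ∃ γ : I → B, Continuous γ ∧ Function.Injective γ ∧ γ 0 = t0 ∧
    (∀ s : I, s ≠ 0 → γ s ∈ S) ∧ δ = Set.range γ

/-- `f` has no vanishing component at `t0`: for every embedded arc `γ` starting at `t0`
over whose image minus `t0` the map `f` is a locally trivial fibration, every connected
component of `f ⁻¹' (γ((0,1]))` has closure meeting the fiber `f ⁻¹' {t0}`. -/
def NoVanishingComponent {E B : Type*} [TopologicalSpace E] [TopologicalSpace B]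
    (f : E → B) (t0 : B) : Prop :=
  ∀ γ : I → B, Continuous γ → Function.Injective γ → γ 0 = t0 →
    IsLocTrivOn f (γ '' {s : I | s ≠ 0}) →
    ∀ x ∈ f ⁻¹' (γ '' {s : I | s ≠ 0}),
      (closure (connectedComponentIn (f ⁻¹' (γ '' {s : I | s ≠ 0})) x) ∩
        f ⁻¹' {t0}).Nonempty

/-! ### Polynomial maps and semialgebraic sets -/

/-- A polynomial map `ℝ^m → ℝ^n`: each component is (the evaluation of) a real
polynomial in `m` variables. -/
def IsPolyMap {m n : ℕ} (f : EuclideanSpace ℝ (Fin m) → EuclideanSpace ℝ (Fin n)) : Prop :=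
  ∀ j : Fin n, ∃ P : MvPolynomial (Fin m) ℝ, ∀ x, f x j = MvPolynomial.eval (fun k => x k) P

/-- Semialgebraic subsets of `ℝ^n`. -/
inductive IsSemialgebraic {n : ℕ} : Set (EuclideanSpace ℝ (Fin n)) → Prop
  | zeroSet (P : MvPolynomial (Fin n) ℝ) :
      IsSemialgebraic {x | MvPolynomial.eval (fun j => x j) P = 0}
  | posSet (P : MvPolynomial (Fin n) ℝ) :
      IsSemialgebraic {x | 0 < MvPolynomial.eval (fun j => x j) P}
  | union {s t : Set (EuclideanSpace ℝ (Fin n))} :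
      IsSemialgebraic s → IsSemialgebraic t → IsSemialgebraic (s ∪ t)
  | inter {s t : Set (EuclideanSpace ℝ (Fin n))} :
      IsSemialgebraic s → IsSemialgebraic t → IsSemialgebraic (s ∩ t)
  | compl {s : Set (EuclideanSpace ℝ (Fin n))} :
      IsSemialgebraic s → IsSemialgebraic sᶜ

/-! ### Spheres, vanishing and emerging cycles -/

/-- The `i`-dimensional sphere, realized as the unit sphere in `ℝ^{i+1}`. -/
def SphS (i : ℕ) : Set (EuclideanSpace ℝ (Fin (i + 1))) := Metric.sphere 0 1

/-- The base point of the `i`-dimensional sphere. -/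
def spherePt (i : ℕ) : ↥(SphS i) := ⟨EuclideanSpace.single 0 1, by simp [SphS]⟩

/-- A map `h : Z → E` is null-homotopic in `A ⊆ E` (its image being contained in `A`)
if it is homotopic within `A` to a constant map. -/
def NullHomotopicIn {Z E : Type*} [TopologicalSpace Z] [TopologicalSpace E]
    (h : Z → E) (A : Set E) : Prop :=
  ∃ (H : Z × I → E) (c : E), Continuous H ∧ (∀ q, H q ∈ A) ∧
    (∀ z, H (z, 0) = h z) ∧ ∀ z, H (z, 1) = c

/-- Two maps `h₀ h₁ : Z → E` are (freely) homotopic in `A ⊆ E`. -/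
def HomotopicIn {Z E : Type*} [TopologicalSpace Z] [TopologicalSpace E]
    (h₀ h₁ : Z → E) (A : Set E) : Prop :=
  ∃ H : Z × I → E, Continuous H ∧ (∀ q, H q ∈ A) ∧
    (∀ z, H (z, 0) = h₀ z) ∧ ∀ z, H (z, 1) = h₁ z

/-- Two maps `h₀ h₁ : Z → E` are homotopic in `A ⊆ E` relative to the base point `z0`. -/
def HomotopicInRel {Z E : Type*} [TopologicalSpace Z] [TopologicalSpace E]
    (h₀ h₁ : Z → E) (A : Set E) (z0 : Z) : Prop :=
  ∃ H : Z × I → E, Continuous H ∧ (∀ q, H q ∈ A) ∧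
    (∀ z, H (z, 0) = h₀ z) ∧ (∀ z, H (z, 1) = h₁ z) ∧ ∀ τ, H (z0, τ) = h₀ z0

/-- A vanishing `i`-cycle of `f` over the parametrized arc `γ`: a fibered map
`g : S^i × [0,1] → E` over `γ` such that `g(·,s)` is null-homotopic in the fiber
`f ⁻¹' {γ s}` for every `s > 0`. -/
def IsVanishingCycle {E B : Type*} [TopologicalSpace E] [TopologicalSpace B]
    (f : E → B) (γ : I → B) (i : ℕ) (g : ↥(SphS i) × I → E) : Prop :=
  Continuous g ∧ (∀ x s, f (g (x, s)) = γ s) ∧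
    ∀ s : I, s ≠ 0 → NullHomotopicIn (fun x => g (x, s)) (f ⁻¹' {γ s})

/-- A vanishing cycle is trivial if `g(·,0)` is also null-homotopic in `f ⁻¹' {γ 0}`. -/
def VanishingCycleTrivial {E B : Type*} [TopologicalSpace E] [TopologicalSpace B]
    (f : E → B) (γ : I → B) (i : ℕ) (g : ↥(SphS i) × I → E) : Prop :=
  NullHomotopicIn (fun x => g (x, 0)) (f ⁻¹' {γ 0})

/-- An emerging `i`-cycle of `f` over the parametrized arc `γ`: a fibered map
`g : S^i × (0,1] → E` over `γ` such that the base point image `g(x₀,s)` has a limit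
as `s → 0`. -/
def IsEmergingCycle {E B : Type*} [TopologicalSpace E] [TopologicalSpace B]
    (f : E → B) (γ : I → B) (i : ℕ) (g : ↥(SphS i) × {s : I // s ≠ 0} → E) : Prop :=
  Continuous g ∧ (∀ x s, f (g (x, s)) = γ s.1) ∧
    ∃ L : E, Filter.Tendsto (fun s : {s : I // s ≠ 0} => g (spherePt i, s))
      (Filter.comap Subtype.val (𝓝[≠] (0 : I))) (𝓝 L)

/-- An emerging cycle is trivial if it agrees near `0`, up to fiberwise base-point
preserving homotopy, with a fibered map defined on `S^i × [0,ε)`. -/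
def EmergingCycleTrivial {E B : Type*} [TopologicalSpace E] [TopologicalSpace B]
    (f : E → B) (γ : I → B) (i : ℕ) (g : ↥(SphS i) × {s : I // s ≠ 0} → E) : Prop :=
  ∃ ε : I, ε ≠ 0 ∧ ∃ g' : ↥(SphS i) × {s : I // (s : ℝ) < (ε : ℝ)} → E,
    Continuous g' ∧ (∀ x s, f (g' (x, s)) = γ s.1) ∧
      ∀ (s : {s : I // s ≠ 0}) (hs : ((s : I) : ℝ) < (ε : ℝ)),
        g' (spherePt i, ⟨s.1, hs⟩) = g (spherePt i, s) ∧
        HomotopicInRel (fun x => g (x, s)) (fun x => g' (x, ⟨s.1, hs⟩))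
          (f ⁻¹' {γ s.1}) (spherePt i)

/-!
Near `γ ε` the map `f` is trivial over an arc `γ [a, ε]` with `0 < a < ε`. The homotopy
`ḡ_a ≃ g_a` inside the fiber over `γ a`, followed by `s ↦ g_s` for `s ∈ [a, ε]`, is a homotopy
from `ḡ_a` to `g_ε` inside `f⁻¹(γ [a, ε])`. Keeping its fiber coordinate in the trivialization
and replacing its base coordinate by `γ s` turns it, after reparametrizing `[a, ε]`, into a
fibered map over `[a, ε]` from `ḡ_a` to `g_ε`; glue it with `ḡ` on `[0, a]` and with `g` on
`[ε, 1]`.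
-/

section HomotopicIn

variable {Z E : Type*} [TopologicalSpace Z] [TopologicalSpace E] {h₀ h₁ h₂ : Z → E}
  {A B : Set E}

theorem HomotopicIn.mono (h : HomotopicIn h₀ h₁ A) (hAB : A ⊆ B) : HomotopicIn h₀ h₁ B :=
  let ⟨H, hHc, hHA, hH₀, hH₁⟩ := h
  ⟨H, hHc, fun q => hAB (hHA q), hH₀, hH₁⟩

theorem HomotopicIn.symm (h : HomotopicIn h₀ h₁ A) : HomotopicIn h₁ h₀ A :=
  let ⟨H, hHc, hHA, hH₀, hH₁⟩ := h
  ⟨fun q => H (q.1, σ q.2), by fun_prop, fun _ => hHA _,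
    fun z => by simp only [unitInterval.symm_zero, hH₁],
    fun z => by simp only [unitInterval.symm_one, hH₀]⟩

theorem HomotopicIn.trans (h : HomotopicIn h₀ h₁ A) (h' : HomotopicIn h₁ h₂ A) :
    HomotopicIn h₀ h₂ A := by
  obtain ⟨H, hHc, hHA, hH₀, hH₁⟩ := h
  obtain ⟨H', hH'c, hH'A, hH'₀, hH'₁⟩ := h'
  let homotopy (K : Z × I → E) (hKc : Continuous K) (hKA : ∀ q, K q ∈ A) :
      ContinuousMap.Homotopy (⟨fun z => ⟨K (z, 0), hKA _⟩, by fun_prop⟩ : C(Z, A))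
        ⟨fun z => ⟨K (z, 1), hKA _⟩, by fun_prop⟩ :=
    ⟨⟨fun p => ⟨K (p.2, p.1), hKA _⟩, by fun_prop⟩, fun _ => rfl, fun _ => rfl⟩
  have hmid : (⟨fun z => ⟨H (z, 1), hHA _⟩, by fun_prop⟩ : C(Z, A)) =
      ⟨fun z => ⟨H' (z, 0), hH'A _⟩, by fun_prop⟩ :=
    ContinuousMap.ext fun z => Subtype.ext ((hH₁ z).trans (hH'₀ z).symm)
  let T := (homotopy H hHc hHA).trans ((homotopy H' hH'c hH'A).cast hmid.symm rfl)
  exact ⟨fun q => T (q.2, q.1), by fun_prop, fun q => (T _).2,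
    fun z => (congrArg Subtype.val (T.apply_zero z)).trans (hH₀ z),
    fun z => (congrArg Subtype.val (T.apply_one z)).trans (hH'₁ z)⟩

end HomotopicIn

theorem exists_Icc_subset_of_mem_nhds_of_lt {α : Type*} [LinearOrder α] [TopologicalSpace α]
    [OrderTopology α] [DenselyOrdered α] {l b : α} (hlb : l < b) {W : Set α} (hW : W ∈ 𝓝 b) :
    ∃ a, l < a ∧ a < b ∧ Icc a b ⊆ W := by
  obtain ⟨l', hl', hsub⟩ := exists_Ioc_subset_of_mem_nhds' hW hlb
  obtain ⟨a, hl'a, hab⟩ := exists_between hl'.2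
  exact ⟨a, hl'.1.trans_lt hl'a, hab, (Icc_subset_Ioc_left hl'a).trans hsub⟩

theorem exists_continuous_unitInterval_eq_zero_eq_one {X : Type*} [TopologicalSpace X]
    [NormalSpace X] [T1Space X] {a b : X} (hab : a ≠ b) :
    ∃ τ : X → I, Continuous τ ∧ τ a = 0 ∧ τ b = 1 := by
  obtain ⟨u, hu0, hu1, hu⟩ := exists_continuous_zero_one_of_isClosed isClosed_singleton
    isClosed_singleton (disjoint_singleton.2 hab)
  exact ⟨fun x => ⟨u x, hu x⟩, by fun_prop, Subtype.ext (hu0 rfl), Subtype.ext (hu1 rfl)⟩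

theorem exists_continuous_piecewise_of_le {X Y α : Type*} [TopologicalSpace X]
    [TopologicalSpace Y] [LinearOrder α] [TopologicalSpace α] [OrderClosedTopology α] {a b : α}
    (hab : a ≤ b) {u v w : X × α → Y} (hu : Continuous u) (hv : Continuous v)
    (hw : Continuous w) (huv : ∀ x, u (x, a) = v (x, a)) (hvw : ∀ x, v (x, b) = w (x, b)) :
    ∃ G : X × α → Y, Continuous G ∧ (∀ x s, s ≤ a → G (x, s) = u (x, s)) ∧
      (∀ x s, a ≤ s → s ≤ b → G (x, s) = v (x, s)) ∧ ∀ x s, b ≤ s → G (x, s) = w (x, s) := by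
  classical
  refine ⟨fun p => if p.2 ≤ a then u p else if p.2 ≤ b then v p else w p,
    hu.if_le (hv.if_le hw continuous_snd continuous_const ?_) continuous_snd continuous_const ?_,
    fun x s hs => if_pos hs, fun x s has hsb => ?_, fun x s hbs => ?_⟩
  · rintro ⟨x, s⟩ (rfl : s = b)
    exact hvw x
  · rintro ⟨x, s⟩ (rfl : s = a)
    exact (huv x).trans (if_pos hab).symm
  · rcases has.eq_or_lt with rfl | has
    · exact (if_pos le_rfl).trans (huv x)
    · exact (if_neg has.not_ge).trans (if_pos hsb)
  · rcases hbs.eq_or_lt with rfl | hbs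
    · simp only [le_rfl, if_true]
      split_ifs with hba
      · obtain rfl := le_antisymm hab hba
        exact (huv x).trans (hvw x)
      · exact hvw x
    · exact (if_neg (hab.trans_lt hbs).not_ge).trans (if_neg hbs.not_ge)

section Trivialization

variable {E B : Type*} [TopologicalSpace E] [TopologicalSpace B] {f : E → B}

theorem IsLocTrivOn.exists_Icc_trivialization {γ : I → B}
    (hlt : IsLocTrivOn f (γ '' {s : I | s ≠ 0})) (hγ : Continuous γ) {ε : I} (hε : ε ≠ 0) :
    ∃ a, 0 < a ∧ a < ε ∧ ∃ U : Set B, γ '' Icc a ε ⊆ U ∧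
      ∃ φ : ↥(f ⁻¹' U) ≃ₜ ↥U × ↥(f ⁻¹' {γ ε}), ∀ y, ((φ y).1 : B) = f y := by
  obtain ⟨V, hVo, hεV, φ, hφ⟩ := hlt (γ ε) ⟨ε, hε, rfl⟩
  obtain ⟨a, ha0, haε, haV⟩ := exists_Icc_subset_of_mem_nhds_of_lt
    (unitInterval.pos_iff_ne_zero.2 hε) ((hVo.preimage hγ).mem_nhds hεV)
  exact ⟨a, ha0, haε, V ∩ γ '' {s : I | s ≠ 0}, image_subset_iff.2 fun s hs =>
    ⟨haV hs, s, (ha0.trans_le hs.1).ne', rfl⟩, φ, hφ⟩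

variable {F X T : Type*} [TopologicalSpace F] [TopologicalSpace X] [TopologicalSpace T]
  {U : Set B}

theorem exists_fibered_map_of_trivialization (φ : ↥(f ⁻¹' U) ≃ₜ ↥U × F)
    (hφ : ∀ y, ((φ y).1 : B) = f y) {δ : T → U} (hδ : Continuous δ)
    {H : X × T → ↥(f ⁻¹' U)} (hH : Continuous H) :
    ∃ G : X × T → E, Continuous G ∧ (∀ p, f (G p) = δ p.2) ∧
      ∀ p, f (H p) = δ p.2 → G p = H p := by
  refine ⟨fun p => φ.symm (δ p.2, (φ (H p)).2), by fun_prop, fun p => ?_, fun p hp => ?_⟩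
  · rw [← hφ, Homeomorph.apply_symm_apply]
  · have hbase : (φ (H p)).1 = δ p.2 := Subtype.ext ((hφ _).trans hp)
    simp only [← hbase, Prod.mk.eta, Homeomorph.symm_apply_apply]

theorem exists_fibered_map_Icc_of_homotopicIn (φ : ↥(f ⁻¹' U) ≃ₜ ↥U × F)
    (hφ : ∀ y, ((φ y).1 : B) = f y) {γ : I → B} (hγ : Continuous γ) {a b : I}
    (hab : a < b) (hγU : γ '' Icc a b ⊆ U) {h₀ h₁ : X → E} (hh₀ : ∀ x, f (h₀ x) = γ a)
    (hh₁ : ∀ x, f (h₁ x) = γ b) (hh : HomotopicIn h₀ h₁ (f ⁻¹' U)) :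
    ∃ G : X × I → E, Continuous G ∧ (∀ x, ∀ s ∈ Icc a b, f (G (x, s)) = γ s) ∧
      (∀ x, G (x, a) = h₀ x) ∧ ∀ x, G (x, b) = h₁ x := by
  obtain ⟨K, hKc, hKU, hK₀, hK₁⟩ := hh
  obtain ⟨τ, hτc, hτa, hτb⟩ := exists_continuous_unitInterval_eq_zero_eq_one hab.ne
  obtain ⟨G, hGc, hGf, hGK⟩ := exists_fibered_map_of_trivialization φ hφ
    (δ := fun s => ⟨γ (projIcc a b hab.le s), hγU (mem_image_of_mem γ (projIcc a b _ s).2)⟩)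
    (by fun_prop) (H := fun p => ⟨K (p.1, τ p.2), hKU _⟩) (by fun_prop)
  refine ⟨G, hGc, fun x s hs => (hGf (x, s)).trans (by simp only [projIcc_of_mem _ hs]),
    fun x => ?_, fun x => ?_⟩
  · have hKa : K (x, τ a) = h₀ x := by rw [hτa, hK₀]
    exact (hGK (x, a) (by simp only [hKa, hh₀, projIcc_left])).trans hKa
  · have hKb : K (x, τ b) = h₁ x := by rw [hτb, hK₁]
    exact (hGK (x, b) (by simp only [hKb, hh₁, projIcc_right])).trans hKb

end Trivialization

theorem exists_fibered_map_piecewise {X E B : Type*} [TopologicalSpace X] [TopologicalSpace E]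
    {f : E → B} {γ : I → B} {a ε : I} (haε : a ≤ ε) (hε : ε ≠ 0)
    {g : X × {s : I // s ≠ 0} → E} (hgc : Continuous g) (hgf : ∀ x s, f (g (x, s)) = γ s.1)
    {gbar : X × {s : I // s ≤ ε} → E} (hgbarc : Continuous gbar)
    (hgbarf : ∀ x s, f (gbar (x, s)) = γ s.1) {G : X × I → E} (hGc : Continuous G)
    (hGf : ∀ x, ∀ s ∈ Icc a ε, f (G (x, s)) = γ s) (hGa : ∀ x, G (x, a) = gbar (x, ⟨a, haε⟩))
    (hGε : ∀ x, G (x, ε) = g (x, ⟨ε, hε⟩)) :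
    ∃ gt : X × I → E, Continuous gt ∧ (∀ x s, f (gt (x, s)) = γ s) ∧
      (∀ x s (_ : s ≤ a) (hsε : s ≤ ε), gt (x, s) = gbar (x, ⟨s, hsε⟩)) ∧
      ∀ x s (_ : ε ≤ s) (hs0 : s ≠ 0), gt (x, s) = g (x, ⟨s, hs0⟩) := by
  have hmax : ∀ s : I, max s ε ≠ 0 :=
    fun s => ((unitInterval.pos_iff_ne_zero.2 hε).trans_le (le_max_right _ _)).ne'
  obtain ⟨gt, hgtc, hgt_le, hgt_mid, hgt_ge⟩ := exists_continuous_piecewise_of_le haε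
    (u := fun p => gbar (p.1, ⟨min p.2 ε, min_le_right _ _⟩)) (v := G)
    (w := fun p => g (p.1, ⟨max p.2 ε, hmax p.2⟩)) (by fun_prop) hGc (by fun_prop)
    (fun x => by simp only [hGa, min_eq_left haε]) (fun x => by simp only [hGε, max_self])
  refine ⟨gt, hgtc, fun x s => ?_, fun x s hsa hsε => ?_, fun x s hεs _ => ?_⟩
  · rcases le_total s a with hsa | has
    · rw [hgt_le x s hsa]
      exact (hgbarf _ _).trans (congrArg γ (min_eq_left (hsa.trans haε)))
    rcases le_total s ε with hsε | hεs
    · rw [hgt_mid x s has hsε]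
      exact hGf x s ⟨has, hsε⟩
    · rw [hgt_ge x s hεs]
      exact (hgf _ _).trans (congrArg γ (max_eq_left hεs))
  · rw [hgt_le x s hsa]
    simp only [min_eq_left hsε]
  · rw [hgt_ge x s hεs]
    simp only [max_eq_left hεs]

theorem trivial_emerging_cycle_extends_over_arc_general
    (m n : ℕ)
    (f : EuclideanSpace ℝ (Fin m) → EuclideanSpace ℝ (Fin n))
    (γ : I → EuclideanSpace ℝ (Fin n)) (hγc : Continuous γ)
    (hlt : IsLocTrivOn f (γ '' {s : I | s ≠ 0}))
    (i : ℕ) (g : ↥(SphS i) × {s : I // s ≠ 0} → EuclideanSpace ℝ (Fin m))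
    (hg : IsEmergingCycle f γ i g)
    (ε : I) (hε : ε ≠ 0)
    (gbar : ↥(SphS i) × {s : I // s ≤ ε} → EuclideanSpace ℝ (Fin m))
    (hgbarc : Continuous gbar)
    (hgbarfib : ∀ x (s : {s : I // s ≤ ε}), f (gbar (x, s)) = γ s.1)
    (hhom : ∀ (s : I) (hs0 : s ≠ 0) (hsε : s ≤ ε),
      HomotopicIn (fun x => g (x, ⟨s, hs0⟩)) (fun x => gbar (x, ⟨s, hsε⟩))
        (f ⁻¹' {γ s})) :
    ∃ ε' : I, ε' ≠ 0 ∧ ε' < ε ∧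
      ∃ gt : ↥(SphS i) × I → EuclideanSpace ℝ (Fin m),
        Continuous gt ∧ (∀ x s, f (gt (x, s)) = γ s) ∧
        (∀ x (s : I) (hsε' : s ≤ ε') (hsε : s ≤ ε), gt (x, s) = gbar (x, ⟨s, hsε⟩)) ∧
        ∀ x (s : I) (hεs : ε ≤ s) (hs0 : s ≠ 0), gt (x, s) = g (x, ⟨s, hs0⟩) := by
  obtain ⟨hgc, hgf, -⟩ := hg
  obtain ⟨a, ha0, haε, U, hγU, φ, hφ⟩ := hlt.exists_Icc_trivialization hγc hε
  have hne : ∀ s : I, a ≤ s → s ≠ 0 := fun s has => (ha0.trans_le has).ne'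
  have hgU : HomotopicIn (fun x => g (x, ⟨a, ha0.ne'⟩)) (fun x => g (x, ⟨ε, hε⟩)) (f ⁻¹' U) :=
    ⟨fun q => g (q.1, ⟨projIcc a ε haε.le q.2, hne _ (projIcc a ε haε.le q.2).2.1⟩),
      by fun_prop,
      fun q => by rw [mem_preimage, hgf]; exact hγU (mem_image_of_mem γ (projIcc a ε haε.le _).2),
      fun x => by simp only [projIcc_of_le_left _ unitInterval.nonneg'],
      fun x => by simp only [projIcc_of_right_le _ unitInterval.le_one']⟩
  have hgbarU : HomotopicIn (fun x => gbar (x, ⟨a, haε.le⟩)) (fun x => g (x, ⟨a, ha0.ne'⟩))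
      (f ⁻¹' U) :=
    ((hhom a ha0.ne' haε.le).mono (preimage_mono (singleton_subset_iff.2
      (hγU (mem_image_of_mem γ (left_mem_Icc.2 haε.le)))))).symm
  obtain ⟨G, hGc, hGf, hGa, hGε⟩ := exists_fibered_map_Icc_of_homotopicIn φ hφ hγc haε hγU
    (fun x => hgbarfib x _) (fun x => hgf x _) (hgbarU.trans hgU)
  obtain ⟨gt, hgtc, hgtf, hgt_le, hgt_ge⟩ :=
    exists_fibered_map_piecewise haε.le hε hgc hgf hgbarc hgbarfib hGc hGf hGa hGε
  exact ⟨a, ha0.ne', haε, gt, hgtc, hgtf, hgt_le, hgt_ge⟩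

/-- **Lemma 4.2 (Lemma 43).** Let `f : ℝ^m → ℝ^n` be a polynomial map and `γ` an embedded
arc such that `f` is a locally trivial fibration over `γ((0,1])`.  If
`g : S^i × (0,1] → E` is a trivial emerging `i`-cycle, with triviality witnessed by
`ε > 0` and a fibered map `ḡ : S^i × [0,ε] → E` with `g(·,s)` homotopic to `ḡ(·,s)` in
`f⁻¹(γ(s))` for each `s ∈ (0,ε]`, then there are `0 < ε' < ε` and a fibered map
`g̃ : S^i × [0,1] → E` with `g̃ = ḡ` on `[0,ε']` and `g̃ = g` on `[ε,1]`. -/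
theorem trivial_emerging_cycle_extends_over_arc
    (m n : ℕ)
    (f : EuclideanSpace ℝ (Fin m) → EuclideanSpace ℝ (Fin n)) (hf : IsPolyMap f)
    (γ : I → EuclideanSpace ℝ (Fin n)) (hγc : Continuous γ)
    (hγi : Function.Injective γ)
    (hlt : IsLocTrivOn f (γ '' {s : I | s ≠ 0}))
    (i : ℕ) (g : ↥(SphS i) × {s : I // s ≠ 0} → EuclideanSpace ℝ (Fin m))
    (hg : IsEmergingCycle f γ i g)
    (ε : I) (hε : ε ≠ 0)
    (gbar : ↥(SphS i) × {s : I // s ≤ ε} → EuclideanSpace ℝ (Fin m))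
    (hgbarc : Continuous gbar)
    (hgbarfib : ∀ x (s : {s : I // s ≤ ε}), f (gbar (x, s)) = γ s.1)
    (hhom : ∀ (s : I) (hs0 : s ≠ 0) (hsε : s ≤ ε),
      HomotopicIn (fun x => g (x, ⟨s, hs0⟩)) (fun x => gbar (x, ⟨s, hsε⟩))
        (f ⁻¹' {γ s})) :
    ∃ ε' : I, ε' ≠ 0 ∧ ε' < ε ∧
      ∃ gt : ↥(SphS i) × I → EuclideanSpace ℝ (Fin m),
        Continuous gt ∧ (∀ x s, f (gt (x, s)) = γ s) ∧
        (∀ x (s : I) (hsε' : s ≤ ε') (hsε : s ≤ ε), gt (x, s) = gbar (x, ⟨s, hsε⟩)) ∧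
        ∀ x (s : I) (hεs : ε ≤ s) (hs0 : s ≠ 0), gt (x, s) = g (x, ⟨s, hs0⟩) :=
  trivial_emerging_cycle_extends_over_arc_general m n f γ hγc hlt i g hg ε hε gbar hgbarc hgbarfib
    hhom
end
end

section
/- Let F = (f_1, f_2, f_3): ℝ^5 → ℝ^3 be the polynomial map defined by f_1(x,y,z,u,v) = y² + (u²x+1)(vx−1)(x² + (v−u²)x + 1), f_2(x,y,z,u,v) = (z² + u²) − v(u²+1)(z²+1), f_3(x,y,z,u,v) = u, and let δ = {(0,0,u) ∈ ℝ^3 : u ∈ [0,1]}. Then the restriction of F to F^{-1}(δ) has no singular point: at every point p ∈ ℝ^5 with F(p) ∈ δ, the total derivative DF(p): ℝ^5 → ℝ^3 is surjective. -/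
noncomputable section

/-- The polynomial map `F = (f₁, f₂, f₃) : ℝ⁵ → ℝ³` from Section 5. -/
def F : ℝ × ℝ × ℝ × ℝ × ℝ → ℝ × ℝ × ℝ :=
  fun (x, y, z, u, v) =>
    (y ^ 2 + (u ^ 2 * x + 1) * (v * x - 1) * (x ^ 2 + (v - u ^ 2) * x + 1),
      (z ^ 2 + u ^ 2) - v * (u ^ 2 + 1) * (z ^ 2 + 1),
      u)

/-- The arc `δ = {(0,0,u) : u ∈ [0,1]} ⊆ ℝ³`. -/
def δ : Set (ℝ × ℝ × ℝ) := {w | w.1 = 0 ∧ w.2.1 = 0 ∧ w.2.2 ∈ Set.Icc (0 : ℝ) 1}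

/-! The third row of `DF` is `du`, the second has `∂f₂/∂v = -(u² + 1)(z² + 1) ≠ 0`, and `x`, `y`
enter only `f₁`; so `DF(p)` is onto as soon as `∂f₁/∂x` or `∂f₁/∂y = 2y` is nonzero. If `y = 0`,
then `f₁ = 0` makes `x` a root of the cubic `(u²x + 1)(vx − 1)(x² + (v − u²)x + 1)`. On `F⁻¹(δ)`
we have `0 ≤ v < 1` and `u² ≤ 1`, so the quadratic factor is positive and `x` is a simple root of
one of the linear factors. -/

theorem LinearMap.surjective_of_lowerTriangular {K E : Type*} [Field K] [AddCommGroup E]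
    [Module K E] (L : E →ₗ[K] K × K × K) {w₁ w₂ w₃ : E} {a b c d e f : K}
    (ha : a ≠ 0) (hc : c ≠ 0) (hf : f ≠ 0)
    (h₁ : L w₁ = (a, 0, 0)) (h₂ : L w₂ = (b, c, 0)) (h₃ : L w₃ = (d, e, f)) :
    Function.Surjective L := by
  rintro ⟨p, q, r⟩
  set t₃ := r / f
  set t₂ := (q - t₃ * e) / c
  refine ⟨((p - t₃ * d - t₂ * b) / a) • w₁ + t₂ • w₂ + t₃ • w₃, ?_⟩
  simp only [map_add, map_smul, h₁, h₂, h₃, Prod.smul_mk, smul_eq_mul, Prod.mk_add_mk,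
    Prod.mk.injEq, t₂, t₃]
  refine ⟨?_, ?_, ?_⟩ <;> field_simp <;> ring

lemma F_differentiable : Differentiable ℝ F := by
  unfold F
  fun_prop

lemma fderiv_F_apply {p w : ℝ × ℝ × ℝ × ℝ × ℝ} {D : ℝ × ℝ × ℝ}
    (h : HasLineDerivAt ℝ F D p w) :
    fderiv ℝ F p w = D :=
  ((F_differentiable p).hasFDerivAt.hasLineDerivAt w).unique h

section Columns

variable (x y z u v : ℝ)

lemma hasLineDerivAt_F_x :
    HasLineDerivAt ℝ F
      ((u ^ 2 * (v * x - 1) + (u ^ 2 * x + 1) * v) * (x ^ 2 + (v - u ^ 2) * x + 1) +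
        (u ^ 2 * x + 1) * (v * x - 1) * (2 * x + (v - u ^ 2)), 0, 0)
      (x, y, z, u, v) (1, 0, 0, 0, 0) := by
  unfold HasLineDerivAt
  simp only [F, Prod.smul_mk, smul_eq_mul, mul_one, mul_zero, add_zero]
  have hx : HasDerivAt (fun t : ℝ => x + t) 1 0 := (hasDerivAt_id 0).const_add x
  have hcubic :=
    ((((hx.const_mul (u ^ 2)).add_const 1).fun_mul ((hx.const_mul v).sub_const 1)).fun_mul
    (((hx.fun_pow 2).fun_add (hx.const_mul (v - u ^ 2))).add_const 1)).const_add (y ^ 2)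
  refine (hcubic.congr_deriv ?_).prodMk ((hasDerivAt_const _ _).prodMk (hasDerivAt_const _ _))
  ring

lemma hasLineDerivAt_F_y : HasLineDerivAt ℝ F (2 * y, 0, 0) (x, y, z, u, v) (0, 1, 0, 0, 0) := by
  unfold HasLineDerivAt
  simp only [F, Prod.smul_mk, smul_eq_mul, mul_one, mul_zero, add_zero]
  have hy : HasDerivAt (fun t : ℝ => y + t) 1 0 := (hasDerivAt_id 0).const_add y
  refine ((((hy.fun_pow 2).add_const _).congr_deriv ?_).prodMk
    ((hasDerivAt_const _ _).prodMk (hasDerivAt_const _ _)))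
  ring

lemma hasLineDerivAt_F_u :
    HasLineDerivAt ℝ F
      (2 * u * x * (v * x - 1) * ((x ^ 2 + (v - u ^ 2) * x + 1) - (u ^ 2 * x + 1)),
        2 * u * (1 - v * (z ^ 2 + 1)), 1)
      (x, y, z, u, v) (0, 0, 0, 1, 0) := by
  unfold HasLineDerivAt
  simp only [F, Prod.smul_mk, smul_eq_mul, mul_one, mul_zero, add_zero]
  have hu : HasDerivAt (fun t : ℝ => u + t) 1 0 := (hasDerivAt_id 0).const_add u
  have hsq := hu.fun_pow 2
  have h₁ := ((((hsq.mul_const x).add_const 1).mul_const (v * x - 1)).fun_mul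
    ((((hsq.const_sub v).mul_const x).const_add (x ^ 2)).add_const 1)).const_add (y ^ 2)
  have h₂ := (hsq.const_add (z ^ 2)).sub (((hsq.add_const 1).const_mul v).mul_const (z ^ 2 + 1))
  refine (h₁.congr_deriv ?_).prodMk ((h₂.congr_deriv ?_).prodMk hu) <;> ring

lemma hasLineDerivAt_F_v :
    HasLineDerivAt ℝ F
      ((u ^ 2 * x + 1) * x * ((v * x - 1) + (x ^ 2 + (v - u ^ 2) * x + 1)),
        -((u ^ 2 + 1) * (z ^ 2 + 1)), 0)
      (x, y, z, u, v) (0, 0, 0, 0, 1) := by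
  unfold HasLineDerivAt
  simp only [F, Prod.smul_mk, smul_eq_mul, mul_one, mul_zero, add_zero]
  have hv : HasDerivAt (fun t : ℝ => v + t) 1 0 := (hasDerivAt_id 0).const_add v
  have h₁ := ((((hv.mul_const x).sub_const 1).const_mul (u ^ 2 * x + 1)).fun_mul
    ((((hv.sub_const (u ^ 2)).mul_const x).const_add (x ^ 2)).add_const 1)).const_add (y ^ 2)
  have h₂ := ((hv.mul_const (u ^ 2 + 1)).mul_const (z ^ 2 + 1)).const_sub (z ^ 2 + u ^ 2)
  refine (h₁.congr_deriv ?_).prodMk ((h₂.congr_deriv ?_).prodMk (hasDerivAt_const _ _)) <;> ring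

end Columns

lemma cubic_deriv_ne_zero_of_root {x u v : ℝ} (hv : 0 ≤ v) (huv : |v - u ^ 2| < 2)
    (hroot : (u ^ 2 * x + 1) * (v * x - 1) * (x ^ 2 + (v - u ^ 2) * x + 1) = 0) :
    (u ^ 2 * (v * x - 1) + (u ^ 2 * x + 1) * v) * (x ^ 2 + (v - u ^ 2) * x + 1) +
      (u ^ 2 * x + 1) * (v * x - 1) * (2 * x + (v - u ^ 2)) ≠ 0 := by
  have hquad : 0 < x ^ 2 + (v - u ^ 2) * x + 1 := by
    obtain ⟨hlo, hhi⟩ := abs_lt.1 huv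
    nlinarith [sq_nonneg (2 * x + (v - u ^ 2))]
  have hlin : (u ^ 2 * x + 1) * (v * x - 1) = 0 :=
    (mul_eq_zero.1 hroot).resolve_right hquad.ne'
  rw [hlin, zero_mul, add_zero]
  refine mul_ne_zero ?_ hquad.ne'
  -- at a root of either linear factor, the derivative of their product is `∓ (u ^ 2 + v)`
  have hpos : 0 < u ^ 2 + v := by
    by_contra! h
    have hu : u ^ 2 = 0 := by nlinarith [sq_nonneg u]
    have hv0 : v = 0 := by linarith [sq_nonneg u]
    rw [hu, hv0] at hlin
    norm_num at hlin
  rcases mul_eq_zero.1 hlin with h | h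
  · have : u ^ 2 * (v * x - 1) + (u ^ 2 * x + 1) * v = -(u ^ 2 + v) := by
      linear_combination 2 * v * h
    rw [this]
    exact neg_ne_zero.2 hpos.ne'
  · have : u ^ 2 * (v * x - 1) + (u ^ 2 * x + 1) * v = u ^ 2 + v := by
      linear_combination 2 * u ^ 2 * h
    rw [this]
    exact hpos.ne'

lemma mem_Ico_of_F_snd_eq_zero {z u v : ℝ}
    (h : (z ^ 2 + u ^ 2) - v * (u ^ 2 + 1) * (z ^ 2 + 1) = 0) :
    v ∈ Set.Ico 0 1 := by
  have hpos : 0 < (u ^ 2 + 1) * (z ^ 2 + 1) := by positivity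
  constructor
  · nlinarith [sq_nonneg u, sq_nonneg z]
  · nlinarith [sq_nonneg (u * z)]

/-- **Claim 1 of Section 5.** The restriction of `F` to `F⁻¹(δ)` has no singular point:
at every `p` with `F p ∈ δ`, the total derivative `DF(p) : ℝ⁵ → ℝ³` is surjective. -/
theorem F_restriction_no_singularity :
    ∀ p : ℝ × ℝ × ℝ × ℝ × ℝ, F p ∈ δ → Function.Surjective (fderiv ℝ F p) := by
  rintro ⟨x, y, z, u, v⟩ ⟨h₁, h₂, hu₀, hu₁⟩
  dsimp only [F] at h₁ h₂ hu₀ hu₁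
  have hcol_u := fderiv_F_apply (hasLineDerivAt_F_u x y z u v)
  have hcol_v := fderiv_F_apply (hasLineDerivAt_F_v x y z u v)
  have hf₂v : -((u ^ 2 + 1) * (z ^ 2 + 1)) ≠ 0 := neg_ne_zero.2 (by positivity)
  by_cases hy : y = 0
  · subst hy
    obtain ⟨hv₀, hv₁⟩ := mem_Ico_of_F_snd_eq_zero h₂
    have huv : |v - u ^ 2| < 2 := abs_lt.2 ⟨by nlinarith, by nlinarith⟩
    have hx := cubic_deriv_ne_zero_of_root (x := x) hv₀ huv (by linear_combination h₁)
    exact (fderiv ℝ F _).toLinearMap.surjective_of_lowerTriangular hx hf₂v one_ne_zero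
      (fderiv_F_apply (hasLineDerivAt_F_x x 0 z u v)) hcol_v hcol_u
  · exact (fderiv ℝ F _).toLinearMap.surjective_of_lowerTriangular (mul_ne_zero two_ne_zero hy)
      hf₂v one_ne_zero (fderiv_F_apply (hasLineDerivAt_F_y x y z u v)) hcol_v hcol_u
end
end

section
/- Let g(x,u,v) = (u²x+1)(vx−1)(x² + (v−u²)x + 1), let g_0(x,z) = g(x, 0, z²/(z²+1)), and let X_0 = {(x,y,z) ∈ ℝ³ : y² + g_0(x,z) = 0}. Then X_0 (with the subspace topology from ℝ³) is homeomorphic to S¹ × ℝ, where S¹ is the unit circle. -/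
noncomputable section

/-- The polynomial `g(x,u,v) = (u²x+1)(vx−1)(x²+(v−u²)x+1)` from Section 5. -/
def g (x u v : ℝ) : ℝ := (u ^ 2 * x + 1) * (v * x - 1) * (x ^ 2 + (v - u ^ 2) * x + 1)

/-- `g₀(x,z) = g(x, 0, z²/(z²+1))`. -/
def g₀ (x z : ℝ) : ℝ := g x 0 (z ^ 2 / (z ^ 2 + 1))

/-- `X₀ = {(x,y,z) ∈ ℝ³ : y² + g₀(x,z) = 0}`, identified with the fiber `F⁻¹(0,0,0)`. -/
def X₀ : Set (ℝ × ℝ × ℝ) := {w | w.2.1 ^ 2 + g₀ w.1 w.2.2 = 0}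

/-- The unit circle `S¹ = {(a,b) ∈ ℝ² : a² + b² = 1}`. -/
def circleS : Set (ℝ × ℝ) := {p | p.1 ^ 2 + p.2 ^ 2 = 1}

/-!
Writing `v = z²/(z²+1)`, a point of `X₀` satisfies `y² = (1 - v x)(x² + v x + 1)`, and the
second factor is positive since `0 ≤ v < 1`. Rescaling `x` by `z² + 1` and `y` by the square root
of that factor identifies `X₀` with the surface `X₁ : Y² + b z² = 1`.

On `X₁` put `t = z² - b` and let `ρ > 0` solve `ρ² - ρ⁻² = t`. Then
`Y² = 1 - b z² = (1 + ρ² z²)(1 - z²/ρ²)`, so `(z/ρ, Y/√(1 + ρ² z²))` lies on the unit circle,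
and `((z/ρ, Y/√(1 + ρ² z²)), t)` is a homeomorphism `X₁ ≃ₜ S¹ × ℝ` with inverse
`((α, β), t) ↦ (ρ⁻² - ρ² β², β √(1 + ρ⁴ α²), ρ α)`.
-/

open Set

def Homeomorph.ofMapsToInvOn {X Y : Type*} [TopologicalSpace X] [TopologicalSpace Y]
    {s : Set X} {t : Set Y} {f : X → Y} {f' : Y → X} (hf : Continuous f) (hf' : Continuous f')
    (hst : MapsTo f s t) (hts : MapsTo f' t s) (hinv : InvOn f' f s t) : s ≃ₜ t where
  toFun := hst.restrict
  invFun := hts.restrict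
  left_inv x := Subtype.ext (hinv.1 x.2)
  right_inv y := Subtype.ext (hinv.2 y.2)
  continuous_toFun := hf.restrict hst
  continuous_invFun := hf'.restrict hts

def X₁ : Set (ℝ × ℝ × ℝ) := {w | w.2.1 ^ 2 + w.1 * w.2.2 ^ 2 = 1}

section Rescaling

def quadFactor (x z : ℝ) : ℝ := x ^ 2 + z ^ 2 / (z ^ 2 + 1) * x + 1

lemma quadFactor_pos (x z : ℝ) : 0 < quadFactor x z := by
  have hv₀ : 0 ≤ z ^ 2 / (z ^ 2 + 1) := by positivity
  have hv₁ : z ^ 2 / (z ^ 2 + 1) < 1 := by rw [div_lt_one (by positivity)]; linarith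
  unfold quadFactor
  nlinarith [sq_nonneg (2 * x + z ^ 2 / (z ^ 2 + 1)), mul_nonneg hv₀ hv₀]

lemma continuous_quadFactor : Continuous fun w : ℝ × ℝ => quadFactor w.1 w.2 := by
  unfold quadFactor
  fun_prop (disch := intro; positivity)

lemma mem_X₀_iff {x y z : ℝ} :
    (x, y, z) ∈ X₀ ↔ y ^ 2 = (1 - x / (z ^ 2 + 1) * z ^ 2) * quadFactor x z := by
  have hg₀ : g₀ x z = (x / (z ^ 2 + 1) * z ^ 2 - 1) * quadFactor x z := by
    simp only [g₀, g, quadFactor]; ring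
  simp only [X₀, mem_ofPred_eq, hg₀]
  constructor <;> intro h <;> linear_combination h

def rescale (w : ℝ × ℝ × ℝ) : ℝ × ℝ × ℝ :=
  (w.1 / (w.2.2 ^ 2 + 1), w.2.1 / √(quadFactor w.1 w.2.2), w.2.2)

def unrescale (w : ℝ × ℝ × ℝ) : ℝ × ℝ × ℝ :=
  (w.1 * (w.2.2 ^ 2 + 1), w.2.1 * √(quadFactor (w.1 * (w.2.2 ^ 2 + 1)) w.2.2), w.2.2)

lemma continuous_rescale : Continuous rescale := by
  have := continuous_quadFactor
  unfold rescale
  fun_prop (disch := intro; first | positivity | exact (Real.sqrt_pos.2 (quadFactor_pos _ _)).ne')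

lemma continuous_unrescale : Continuous unrescale := by
  have := continuous_quadFactor
  unfold unrescale
  fun_prop

lemma mapsTo_rescale : MapsTo rescale X₀ X₁ := by
  rintro ⟨x, y, z⟩ h
  have hq := quadFactor_pos x z
  simp only [rescale, X₁, mem_ofPred_eq, div_pow, Real.sq_sqrt hq.le, mem_X₀_iff.1 h]
  field_simp
  ring

lemma mapsTo_unrescale : MapsTo unrescale X₁ X₀ := by
  rintro ⟨b, Y, z⟩ h
  simp only [X₁, mem_ofPred_eq] at h
  have hz : z ^ 2 + 1 ≠ 0 := by positivity
  simp only [unrescale, mem_X₀_iff, mul_pow, Real.sq_sqrt (quadFactor_pos _ _).le,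
    mul_div_cancel_right₀ b hz]
  linear_combination quadFactor (b * (z ^ 2 + 1)) z * h

lemma invOn_unrescale_rescale : InvOn unrescale rescale X₀ X₁ := by
  have hz (z : ℝ) : z ^ 2 + 1 ≠ 0 := by positivity
  have hq (x z : ℝ) : √(quadFactor x z) ≠ 0 := (Real.sqrt_pos.2 (quadFactor_pos x z)).ne'
  constructor
  · rintro ⟨x, y, z⟩ -
    simp only [rescale, unrescale, div_mul_cancel₀ _ (hz z), div_mul_cancel₀ _ (hq x z)]
  · rintro ⟨b, Y, z⟩ -
    simp only [rescale, unrescale, mul_div_cancel_right₀ _ (hz z),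
      mul_div_cancel_right₀ _ (hq _ z)]

def homeomorphX₀X₁ : X₀ ≃ₜ X₁ :=
  .ofMapsToInvOn continuous_rescale continuous_unrescale mapsTo_rescale mapsTo_unrescale
    invOn_unrescale_rescale

end Rescaling

section Polar

def radius (t : ℝ) : ℝ := √((t + √(t ^ 2 + 4)) / 2)

lemma add_sqrt_sq_add_four_pos (t : ℝ) : 0 < t + √(t ^ 2 + 4) := by
  have hs : t ^ 2 < √(t ^ 2 + 4) ^ 2 := by rw [Real.sq_sqrt (by positivity)]; linarith
  nlinarith [Real.sqrt_nonneg (t ^ 2 + 4)]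

lemma radius_pos (t : ℝ) : 0 < radius t :=
  Real.sqrt_pos.2 (half_pos (add_sqrt_sq_add_four_pos t))

lemma radius_sq_sub_inv_sq (t : ℝ) : radius t ^ 2 - (radius t ^ 2)⁻¹ = t := by
  have hs := Real.sq_sqrt (show 0 ≤ t ^ 2 + 4 by positivity)
  have hr := (add_sqrt_sq_add_four_pos t).ne'
  rw [radius, Real.sq_sqrt (half_pos (add_sqrt_sq_add_four_pos t)).le]
  field_simp
  linear_combination hs

lemma continuous_radius : Continuous radius := by
  unfold radius
  fun_prop

def toCircleProd (w : ℝ × ℝ × ℝ) : (ℝ × ℝ) × ℝ :=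
  ((w.2.2 / radius (w.2.2 ^ 2 - w.1), w.2.1 / √(1 + radius (w.2.2 ^ 2 - w.1) ^ 2 * w.2.2 ^ 2)),
    w.2.2 ^ 2 - w.1)

def ofCircleProd (p : (ℝ × ℝ) × ℝ) : ℝ × ℝ × ℝ :=
  ((radius p.2 ^ 2)⁻¹ - radius p.2 ^ 2 * p.1.2 ^ 2, p.1.2 * √(1 + radius p.2 ^ 4 * p.1.1 ^ 2),
    radius p.2 * p.1.1)

lemma continuous_toCircleProd : Continuous toCircleProd := by
  have := continuous_radius
  unfold toCircleProd
  fun_prop (disch := intro; first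
    | exact (radius_pos _).ne'
    | exact (Real.sqrt_pos.2 (by positivity)).ne')

lemma continuous_ofCircleProd : Continuous ofCircleProd := by
  have := continuous_radius
  unfold ofCircleProd
  fun_prop (disch := intro; exact (pow_pos (radius_pos _) 2).ne')

lemma mapsTo_toCircleProd : MapsTo toCircleProd X₁ (circleS ×ˢ univ) := by
  rintro ⟨b, Y, z⟩ h
  simp only [X₁, mem_ofPred_eq] at h
  have hρ := radius_sq_sub_inv_sq (z ^ 2 - b)
  have hρ0 := (radius_pos (z ^ 2 - b)).ne'
  have hd : 0 < 1 + radius (z ^ 2 - b) ^ 2 * z ^ 2 := by positivity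
  simp only [toCircleProd, mem_prod, mem_univ, and_true, circleS, mem_ofPred_eq, div_pow,
    Real.sq_sqrt hd.le]
  field_simp at hρ ⊢
  linear_combination radius (z ^ 2 - b) ^ 2 * h - z ^ 2 * hρ

lemma mapsTo_ofCircleProd : MapsTo ofCircleProd (circleS ×ˢ univ) X₁ := by
  rintro ⟨⟨α, β⟩, t⟩ ⟨h, -⟩
  simp only [circleS, mem_ofPred_eq] at h
  have hρ0 := (radius_pos t).ne'
  have hd : 0 ≤ 1 + radius t ^ 4 * α ^ 2 := by positivity
  simp only [ofCircleProd, X₁, mem_ofPred_eq, mul_pow, Real.sq_sqrt hd]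
  field_simp
  linear_combination h

lemma invOn_ofCircleProd_toCircleProd :
    InvOn ofCircleProd toCircleProd X₁ (circleS ×ˢ univ) := by
  constructor
  · rintro ⟨b, Y, z⟩ h
    simp only [X₁, mem_ofPred_eq] at h
    have hρ := radius_sq_sub_inv_sq (z ^ 2 - b)
    have hρ0 := (radius_pos (z ^ 2 - b)).ne'
    have hd : 0 < 1 + radius (z ^ 2 - b) ^ 2 * z ^ 2 := by positivity
    have hd' : 1 + radius (z ^ 2 - b) ^ 4 * (z / radius (z ^ 2 - b)) ^ 2
        = 1 + radius (z ^ 2 - b) ^ 2 * z ^ 2 := by field_simp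
    refine Prod.ext ?_ (Prod.ext ?_ ?_) <;> simp only [toCircleProd, ofCircleProd]
    · rw [div_pow, Real.sq_sqrt hd.le]
      field_simp at hρ ⊢
      linear_combination -radius (z ^ 2 - b) ^ 4 * h - hρ
    · rw [hd', div_mul_cancel₀ _ (Real.sqrt_pos.2 hd).ne']
    · exact mul_div_cancel₀ _ hρ0
  · rintro ⟨⟨α, β⟩, t⟩ ⟨h, -⟩
    simp only [circleS, mem_ofPred_eq] at h
    have ht : (radius t * α) ^ 2 - ((radius t ^ 2)⁻¹ - radius t ^ 2 * β ^ 2) = t := by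
      linear_combination radius_sq_sub_inv_sq t + radius t ^ 2 * h
    have hρ0 := (radius_pos t).ne'
    have hd : 0 < 1 + radius t ^ 4 * α ^ 2 := by positivity
    have hd' : 1 + radius t ^ 2 * (radius t * α) ^ 2 = 1 + radius t ^ 4 * α ^ 2 := by ring
    simp only [toCircleProd, ofCircleProd, ht, hd', mul_div_cancel_left₀ _ hρ0,
      mul_div_cancel_right₀ _ (Real.sqrt_pos.2 hd).ne']

def homeomorphX₁CircleProd : X₁ ≃ₜ ↥(circleS ×ˢ (univ : Set ℝ)) :=
  .ofMapsToInvOn continuous_toCircleProd continuous_ofCircleProd mapsTo_toCircleProd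
    mapsTo_ofCircleProd invOn_ofCircleProd_toCircleProd

end Polar

/-- **Claim 2 of Section 5.** `X₀ = F⁻¹(0,0,0)` is homeomorphic to `S¹ × ℝ`. -/
theorem X₀_homeomorph_circle_prod_real : Nonempty (↥X₀ ≃ₜ ↥circleS × ℝ) :=
  ⟨homeomorphX₀X₁ |>.trans homeomorphX₁CircleProd
    |>.trans (Homeomorph.Set.prod circleS univ)
    |>.trans ((Homeomorph.refl circleS).prodCongr (Homeomorph.Set.univ ℝ))⟩
end
end

section
/- Let g(x,u,v) = (u²x+1)(vx−1)(x² + (v−u²)x + 1) and, for u ∈ (0,1], let g_u(x,z) = g(x, u, (z²+u²)/((u²+1)(z²+1))) and X_u = {(x,y,z) ∈ ℝ³ : y² + g_u(x,z) = 0}. Then for every u with 0 < u ≤ 1, the set X_u (with the subspace topology from ℝ³) is homeomorphic to S¹ × ℝ, where S¹ is the unit circle. -/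
noncomputable section

/-- `g_u(x,z) = g(x, u, (z²+u²)/((u²+1)(z²+1)))`. -/
def gu (u x z : ℝ) : ℝ := g x u ((z ^ 2 + u ^ 2) / ((u ^ 2 + 1) * (z ^ 2 + 1)))

/-- `X_u = {(x,y,z) ∈ ℝ³ : y² + g_u(x,z) = 0}`, identified with the fiber `F⁻¹(0,0,u)`. -/
def Xu (u : ℝ) : Set (ℝ × ℝ × ℝ) := {w | w.2.1 ^ 2 + gu u w.1 w.2.2 = 0}

/-!
Write `-g_u(x, z) = c(x, z) (x - a) (b(z) - x)` with `a = -1/u²`, `b(z) = 1/v(z)` and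
`c = u² v (x² + (v - u²) x + 1)`, where `v = v(z) ∈ (0, 1)`. Since `|v - u²| < 2` the quadratic
factor has no real root, so `c > 0`. Hence each slice `z = const` of `X_u` is the oval
`y² = c (x - a) (b - x)` over `[a, b(z)]`, and the fibrewise rescaling
`x ↦ (x - m) / r`, `y ↦ y / (r √c)` (with `m`, `r` the centre and radius of `[a, b(z)]`) is a
homeomorphism of `ℝ³` carrying `X_u` onto `S¹ × ℝ`.
-/

open Real Set

section EllipseBundle

variable {Z : Type*} [TopologicalSpace Z] {m r a b : Z → ℝ} {c : ℝ × Z → ℝ}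

def ellipseBundleChart (hm : Continuous m) (hr : Continuous r) (hc : Continuous c)
    (hr_pos : ∀ z, 0 < r z) (hc_pos : ∀ p, 0 < c p) : ℝ × ℝ × Z ≃ₜ (ℝ × ℝ) × Z where
  toFun p := (((p.1 - m p.2.2) / r p.2.2, p.2.1 / (r p.2.2 * √(c (p.1, p.2.2)))), p.2.2)
  invFun q := (m q.2 + r q.2 * q.1.1, r q.2 * √(c (m q.2 + r q.2 * q.1.1, q.2)) * q.1.2, q.2)
  left_inv := by
    rintro ⟨x, y, z⟩
    have hx : m z + r z * ((x - m z) / r z) = x := by rw [mul_div_cancel₀ _ (hr_pos z).ne']; ring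
    have hs : r z * √(c (x, z)) ≠ 0 := mul_ne_zero (hr_pos z).ne' (sqrt_pos.2 (hc_pos _)).ne'
    simp only [hx, mul_div_cancel₀ _ hs]
  right_inv := by
    rintro ⟨⟨s, t⟩, z⟩
    have hs : r z * √(c (m z + r z * s, z)) ≠ 0 :=
      mul_ne_zero (hr_pos z).ne' (sqrt_pos.2 (hc_pos _)).ne'
    simp only [add_sub_cancel_left, mul_div_cancel_left₀ _ (hr_pos z).ne',
      mul_div_cancel_left₀ _ hs]
  continuous_toFun := by
    have hs : ∀ p : ℝ × ℝ × Z, r p.2.2 * √(c (p.1, p.2.2)) ≠ 0 := fun p =>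
      mul_ne_zero (hr_pos _).ne' (sqrt_pos.2 (hc_pos _)).ne'
    fun_prop (disch := first | exact fun p => (hr_pos _).ne' | exact hs)
  continuous_invFun := by fun_prop

theorem ellipseBundleChart_mem_circle_prod_univ_iff (hm : Continuous m) (hr : Continuous r)
    (hc : Continuous c) (hr_pos : ∀ z, 0 < r z) (hc_pos : ∀ p, 0 < c p) (p : ℝ × ℝ × Z) :
    p.2.1 ^ 2 = c (p.1, p.2.2) * (r p.2.2 ^ 2 - (p.1 - m p.2.2) ^ 2) ↔
      ellipseBundleChart hm hr hc hr_pos hc_pos p ∈ circleS ×ˢ univ := by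
  obtain ⟨x, y, z⟩ := p
  have hr0 := (hr_pos z).ne'
  have hsq : √(c (x, z)) ^ 2 = c (x, z) := sq_sqrt (hc_pos _).le
  have hc0 := (hc_pos (x, z)).ne'
  simp only [ellipseBundleChart, Homeomorph.homeomorph_mk_coe, Equiv.coe_fn_mk, mem_prod,
    circleS, mem_ofPred_eq, mem_univ, and_true]
  rw [div_pow, div_pow, mul_pow, hsq]
  field_simp
  constructor <;> intro h <;> linarith

theorem nonempty_homeomorph_circle_prod (ha : Continuous a) (hb : Continuous b)
    (hc : Continuous c) (hab : ∀ z, a z < b z) (hc_pos : ∀ p, 0 < c p) :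
    Nonempty ({p : ℝ × ℝ × Z | p.2.1 ^ 2 = c (p.1, p.2.2) * ((p.1 - a p.2.2) * (b p.2.2 - p.1))}
      ≃ₜ circleS × Z) := by
  have hm : Continuous fun z => (a z + b z) / 2 := by fun_prop
  have hr : Continuous fun z => (b z - a z) / 2 := by fun_prop
  have hr_pos : ∀ z, 0 < (b z - a z) / 2 := fun z => by linarith [hab z]
  refine ⟨((ellipseBundleChart hm hr hc hr_pos hc_pos).subtype fun p => ?_).trans
    ((Homeomorph.Set.prod _ _).trans ((Homeomorph.refl _).prodCongr (Homeomorph.Set.univ Z)))⟩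
  rw [mem_ofPred_eq, ← ellipseBundleChart_mem_circle_prod_univ_iff]
  ring_nf

end EllipseBundle

theorem quadratic_pos_of_abs_lt_two {β : ℝ} (hβ : |β| < 2) (x : ℝ) : 0 < x ^ 2 + β * x + 1 := by
  nlinarith [sq_nonneg (2 * x + β), sq_abs β, abs_nonneg β]

theorem neg_g_eq {u v : ℝ} (hu : u ≠ 0) (hv : v ≠ 0) (x : ℝ) :
    -g x u v = u ^ 2 * v * (x ^ 2 + (v - u ^ 2) * x + 1) * ((x - -(u ^ 2)⁻¹) * (v⁻¹ - x)) := by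
  rw [g]
  field_simp
  ring

/-- The parameter `v` at which `g_u(x, z) = g(x, u, v)`. -/
def guV (u z : ℝ) : ℝ := (z ^ 2 + u ^ 2) / ((u ^ 2 + 1) * (z ^ 2 + 1))

section

variable {u : ℝ}

theorem guV_pos (hu : 0 < u) (z : ℝ) : 0 < guV u z := by
  unfold guV
  positivity

theorem guV_lt_one (hu : 0 < u) (z : ℝ) : guV u z < 1 := by
  rw [guV, div_lt_one (by positivity)]
  nlinarith [sq_nonneg (u * z)]

@[fun_prop]
theorem continuous_guV (u : ℝ) : Continuous (guV u) := by
  unfold guV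
  fun_prop (disch := exact fun z => by positivity)

theorem Xu_eq (hu : 0 < u) :
    Xu u = {p | p.2.1 ^ 2 = u ^ 2 * guV u p.2.2 * (p.1 ^ 2 + (guV u p.2.2 - u ^ 2) * p.1 + 1) *
      ((p.1 - -(u ^ 2)⁻¹) * ((guV u p.2.2)⁻¹ - p.1))} := by
  ext ⟨x, y, z⟩
  rw [mem_ofPred_eq, ← neg_g_eq hu.ne' (guV_pos hu z).ne']
  exact eq_neg_iff_add_eq_zero.symm

theorem guV_mul_quadratic_pos (hu : 0 < u) (hu1 : u ≤ 1) (x z : ℝ) :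
    0 < u ^ 2 * guV u z * (x ^ 2 + (guV u z - u ^ 2) * x + 1) := by
  have hv₀ := guV_pos hu z
  have hv₁ := guV_lt_one hu z
  exact mul_pos (by positivity)
    (quadratic_pos_of_abs_lt_two (abs_lt.2 ⟨by nlinarith, by nlinarith⟩) x)

theorem neg_inv_sq_lt_inv_guV (hu : 0 < u) (z : ℝ) : -(u ^ 2)⁻¹ < (guV u z)⁻¹ :=
  (neg_neg_of_pos (by positivity)).trans (inv_pos.2 (guV_pos hu z))

end

/-- **Claim 3 of Section 5.** For `0 < u ≤ 1`, the set `X_u = F⁻¹(0,0,u)` is homeomorphic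
to `S¹ × ℝ`. -/
theorem Xu_homeomorph_circle_prod_real :
    ∀ u : ℝ, 0 < u → u ≤ 1 → Nonempty (↥(Xu u) ≃ₜ ↥circleS × ℝ) := by
  intro u hu hu1
  rw [Xu_eq hu]
  exact nonempty_homeomorph_circle_prod continuous_const
    ((continuous_guV u).inv₀ fun z => (guV_pos hu z).ne') (by fun_prop)
    (neg_inv_sq_lt_inv_guV hu) fun p => guV_mul_quadratic_pos hu hu1 p.1 p.2
end
end

section
/- Let g(x,u,v) = (u²x+1)(vx−1)(x² + (v−u²)x + 1) and, for u ∈ (0,1], let g_u(x,z) = g(x, u, (z²+u²)/((u²+1)(z²+1))), X_u = {(x,y,z) ∈ ℝ³ : y² + g_u(x,z) = 0}, and q_u: X_u → ℝ defined by q_u(x,y,z) = z. Then for every u with 0 < u ≤ 1: (a) q_u is a proper map; (b) q_u is surjective; (c) at every point (x,y,z) ∈ X_u the total derivative of the map Ψ_u: ℝ³ → ℝ², Ψ_u(x,y,z) = (y² + g_u(x,z), z), is surjective; and (d) the fiber q_u^{-1}(0) = {(x,y,0) : y² + g_u(x,0) = 0} is homeomorphic to the circle S¹. -/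
noncomputable section

/-- The map `q_u : X_u → ℝ`, `q_u(x,y,z) = z`. -/
def qu (u : ℝ) : ↥(Xu u) → ℝ := fun w => w.1.2.2

/-- The map `Ψ_u : ℝ³ → ℝ²`, `Ψ_u(x,y,z) = (y² + g_u(x,z), z)`. -/
def Ψu (u : ℝ) : ℝ × ℝ × ℝ → ℝ × ℝ :=
  fun w => (w.2.1 ^ 2 + gu u w.1 w.2.2, w.2.2)

/-! Write `v = (z²+u²)/((u²+1)(z²+1))`, so `g_u(x,z) = g(x,u,v)` with `u²/(u²+1) ≤ v < 1`.
Then `|v - u²| < 1`, so the factor `x² + (v-u²)x + 1` is positive and `g ≤ 0` forces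
`-1/u² ≤ x ≤ 1/v ≤ (u²+1)/u²`; with `y² = -g_u` bounded on compacts this makes `q_u` proper.
At a point of `X_u` either `y ≠ 0`, and `∂_y` of the first component of `Ψ_u` is `2y`, or
`y = 0` and `x` is a simple root of `g(·,u,v)`, so `∂_x ≠ 0`; with `∂_z` this spans `ℝ²`.
On `z = 0`, after the affine change `x = x(c)` moving the roots to `c = ±1`, the fiber reads
`y² = (1 - c²) r(c)` with `r > 0`, and `(c, y/√r(c))` lies on `S¹`. -/

open Set Function

def vu (u z : ℝ) : ℝ := (z ^ 2 + u ^ 2) / ((u ^ 2 + 1) * (z ^ 2 + 1))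

lemma gu_eq_g_vu (u x z : ℝ) : gu u x z = g x u (vu u z) := rfl

lemma vu_pos {u : ℝ} (hu : u ≠ 0) (z : ℝ) : 0 < vu u z := by
  unfold vu; positivity

lemma vu_lt_one (u z : ℝ) : vu u z < 1 := by
  rw [vu, div_lt_one (by positivity)]
  nlinarith [sq_nonneg z, sq_nonneg (u * z)]

lemma sq_le_mul_vu {u : ℝ} (hu1 : u ^ 2 ≤ 1) (z : ℝ) : u ^ 2 ≤ (u ^ 2 + 1) * vu u z := by
  have h : (u ^ 2 + 1) * vu u z = (z ^ 2 + u ^ 2) / (z ^ 2 + 1) := by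
    unfold vu; field_simp
  rw [h, le_div_iff₀ (by positivity)]
  nlinarith [mul_nonneg (sq_nonneg z) (sub_nonneg.2 hu1)]

lemma sq_add_mul_add_one_pos {b : ℝ} (hb : b ^ 2 < 4) (x : ℝ) : 0 < x ^ 2 + b * x + 1 := by
  nlinarith [sq_nonneg (2 * x + b)]

lemma sq_vu_sub_sq_lt {u : ℝ} (hu : u ≠ 0) (hu1 : u ^ 2 ≤ 1) (z : ℝ) :
    (vu u z - u ^ 2) ^ 2 < 4 := by
  have := vu_pos hu z
  have := vu_lt_one u z
  nlinarith [sq_nonneg u]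

section g

variable {u v x : ℝ}

lemma neg_one_le_and_le_one_of_g_nonpos (hv : 0 < v) (hQ : (v - u ^ 2) ^ 2 < 4)
    (hg : g x u v ≤ 0) : -1 ≤ u ^ 2 * x ∧ v * x ≤ 1 := by
  have hQpos := sq_add_mul_add_one_pos hQ x
  have hAB : (u ^ 2 * x + 1) * (v * x - 1) ≤ 0 := by
    by_contra! h
    exact hg.not_gt (mul_pos h hQpos)
  constructor
  · by_contra! hA
    have hx : x < 0 := by
      by_contra! hx
      nlinarith [mul_nonneg (sq_nonneg u) hx]
    have hB : v * x - 1 < 0 := by nlinarith [mul_neg_of_pos_of_neg hv hx]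
    exact hAB.not_gt (mul_pos_of_neg_of_neg (by linarith) hB)
  · by_contra! hB
    have hx : 0 < x := by
      by_contra! hx
      nlinarith [mul_nonpos_of_nonneg_of_nonpos hv.le hx]
    have hA : 0 < u ^ 2 * x + 1 := by nlinarith [mul_nonneg (sq_nonneg u) hx.le]
    exact hAB.not_gt (mul_pos hA (by linarith))

lemma hasDerivAt_g (u v x : ℝ) : HasDerivAt (fun x => g x u v)
    (u ^ 2 * (v * x - 1) * (x ^ 2 + (v - u ^ 2) * x + 1)
      + (u ^ 2 * x + 1) * v * (x ^ 2 + (v - u ^ 2) * x + 1)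
      + (u ^ 2 * x + 1) * (v * x - 1) * (2 * x + (v - u ^ 2))) x := by
  have hA := ((hasDerivAt_id' x).const_mul (u ^ 2)).add_const 1
  have hB := ((hasDerivAt_id' x).const_mul v).sub_const 1
  have hQ := (((hasDerivAt_id' x).pow 2).add ((hasDerivAt_id' x).const_mul (v - u ^ 2))).add_const 1
  exact ((hA.mul hB).mul hQ).congr_deriv (by norm_num; ring)

lemma exists_hasDerivAt_g_ne_zero (hv : 0 < v) (hQ : (v - u ^ 2) ^ 2 < 4) (hg : g x u v = 0) :
    ∃ d ≠ 0, HasDerivAt (fun x => g x u v) d x := by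
  refine ⟨_, ?_, hasDerivAt_g u v x⟩
  have hQpos := sq_add_mul_add_one_pos hQ x
  rcases mul_eq_zero.1 ((mul_eq_zero.1 hg).resolve_right hQpos.ne') with hA | hB
  · simp only [hA, zero_mul, add_zero]
    have hB : v * x - 1 < 0 := by nlinarith [sq_nonneg u]
    exact (mul_neg_of_neg_of_pos (mul_neg_of_pos_of_neg (by nlinarith [sq_nonneg u]) hB) hQpos).ne
  · simp only [hB, zero_mul, mul_zero, add_zero, zero_add]
    have hA : 0 < u ^ 2 * x + 1 := by nlinarith [sq_nonneg u]
    exact (mul_pos (mul_pos hA hv) hQpos).ne'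

end g

def Fu (u : ℝ) (w : ℝ × ℝ × ℝ) : ℝ := w.2.1 ^ 2 + gu u w.1 w.2.2

lemma continuous_gu (u : ℝ) : Continuous fun p : ℝ × ℝ => gu u p.1 p.2 := by
  unfold gu g
  fun_prop (disch := intro; positivity)

lemma differentiable_Fu (u : ℝ) : Differentiable ℝ (Fu u) := by
  unfold Fu gu g
  fun_prop (disch := intro; positivity)

lemma isClosed_Xu (u : ℝ) : IsClosed (Xu u) :=
  isClosed_eq (differentiable_Fu u).continuous continuous_const

lemma mem_Icc_of_gu_nonpos {u x z : ℝ} (hu : 0 < u) (hu1 : u ≤ 1) (hg : gu u x z ≤ 0) :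
    x ∈ Icc (-1 / u ^ 2) ((u ^ 2 + 1) / u ^ 2) := by
  have hu2 : u ^ 2 ≤ 1 := pow_le_one₀ hu.le hu1
  obtain ⟨hA, hB⟩ := neg_one_le_and_le_one_of_g_nonpos (vu_pos hu.ne' z)
    (sq_vu_sub_sq_lt hu.ne' hu2 z) hg
  have hv := sq_le_mul_vu hu2 z
  rw [mem_Icc, div_le_iff₀ (by positivity), le_div_iff₀ (by positivity)]
  refine ⟨by linarith, ?_⟩
  rcases le_or_gt x 0 with hx | hx
  · nlinarith [sq_nonneg u]
  · nlinarith

lemma isCompact_Xu_inter_preimage {u : ℝ} (hu : 0 < u) (hu1 : u ≤ 1) {K : Set ℝ}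
    (hK : IsCompact K) : IsCompact (Xu u ∩ (fun w : ℝ × ℝ × ℝ => w.2.2) ⁻¹' K) := by
  let I := Icc (-1 / u ^ 2) ((u ^ 2 + 1) / u ^ 2)
  obtain ⟨C, hC⟩ := (isCompact_Icc.prod hK).exists_bound_of_continuousOn (s := I ×ˢ K)
    (continuous_gu u).continuousOn
  refine (isCompact_Icc.prod (isCompact_Icc.prod hK)).of_isClosed_subset
    (s := I ×ˢ Icc (-(C + 1)) (C + 1) ×ˢ K)
    ((isClosed_Xu u).inter (hK.isClosed.preimage (by fun_prop))) ?_
  rintro ⟨x, y, z⟩ ⟨hw, hz⟩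
  have hw : y ^ 2 + gu u x z = 0 := hw
  have hx := mem_Icc_of_gu_nonpos hu hu1 (by nlinarith [sq_nonneg y])
  have hy : y ^ 2 ≤ C := by
    have := hC (x, z) ⟨hx, hz⟩
    rw [Real.norm_eq_abs] at this
    linarith [neg_abs_le (gu u x z)]
  exact ⟨hx, ⟨by nlinarith [sq_nonneg (y + 1)], by nlinarith [sq_nonneg (y - 1)]⟩, hz⟩

lemma isCompact_preimage_qu {u : ℝ} (hu : 0 < u) (hu1 : u ≤ 1) {K : Set ℝ} (hK : IsCompact K) :
    IsCompact (qu u ⁻¹' K) := by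
  rw [Subtype.isCompact_iff, show qu u ⁻¹' K = Subtype.val ⁻¹' ((fun w => w.2.2) ⁻¹' K) from rfl,
    Subtype.image_preimage_coe]
  exact isCompact_Xu_inter_preimage hu hu1 hK

lemma qu_surjective (u : ℝ) : Surjective (qu u) :=
  fun z => ⟨⟨(0, 1, z), by simp [Xu, gu, g]⟩, rfl⟩

lemma ContinuousLinearMap.prod_surjective_of_exists {𝕜 E : Type*} [Field 𝕜]
    [TopologicalSpace 𝕜] [TopologicalSpace E] [AddCommGroup E] [Module 𝕜 E] {φ ψ : E →L[𝕜] 𝕜}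
    {e₁ e₂ : E} (he₁ : φ e₁ ≠ 0) (hψe₁ : ψ e₁ = 0) (hψe₂ : ψ e₂ = 1) : Surjective (φ.prod ψ) := by
  rintro ⟨a, b⟩
  refine ⟨b • e₂ + ((a - b * φ e₂) / φ e₁) • e₁, ?_⟩
  ext <;> simp [hψe₁, hψe₂, he₁]

lemma hasFDerivAt_Ψu (u : ℝ) (w : ℝ × ℝ × ℝ) :
    HasFDerivAt (Ψu u) ((fderiv ℝ (Fu u) w).prod
      ((ContinuousLinearMap.snd ℝ ℝ ℝ).comp (ContinuousLinearMap.snd ℝ ℝ (ℝ × ℝ)))) w :=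
  (differentiable_Fu u w).hasFDerivAt.prodMk hasFDerivAt_snd.snd

lemma fderiv_Fu_apply_of_hasLineDerivAt {u d : ℝ} {w e : ℝ × ℝ × ℝ}
    (h : HasLineDerivAt ℝ (Fu u) d w e) : fderiv ℝ (Fu u) w e = d :=
  (differentiable_Fu u w).lineDeriv_eq_fderiv.symm.trans h.lineDeriv

lemma fderiv_Fu_apply_y (u : ℝ) (w : ℝ × ℝ × ℝ) :
    fderiv ℝ (Fu u) w (0, 1, 0) = 2 * w.2.1 := by
  apply fderiv_Fu_apply_of_hasLineDerivAt
  unfold HasLineDerivAt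
  have h := (((hasDerivAt_id' (0 : ℝ)).const_add w.2.1).pow 2).add_const (gu u w.1 w.2.2)
  convert h using 1
  · funext t; simp [Fu]
  · simp

lemma fderiv_Fu_apply_x {u d : ℝ} {w : ℝ × ℝ × ℝ}
    (hd : HasDerivAt (fun x => g x u (vu u w.2.2)) d w.1) : fderiv ℝ (Fu u) w (1, 0, 0) = d := by
  apply fderiv_Fu_apply_of_hasLineDerivAt
  unfold HasLineDerivAt
  rw [← add_zero w.1] at hd
  convert (hd.comp_const_add w.1 0).const_add (w.2.1 ^ 2) using 1
  funext t; simp [Fu, gu_eq_g_vu]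

lemma surjective_fderiv_Ψu {u : ℝ} (hu : 0 < u) (hu1 : u ≤ 1) {w : ℝ × ℝ × ℝ} (hw : w ∈ Xu u) :
    Surjective (fderiv ℝ (Ψu u) w) := by
  rw [(hasFDerivAt_Ψu u w).fderiv]
  obtain ⟨x, y, z⟩ := w
  by_cases hy : y = 0
  · have hg : g x u (vu u z) = 0 := by simpa [Xu, hy, gu_eq_g_vu] using hw
    obtain ⟨d, hd0, hd⟩ := exists_hasDerivAt_g_ne_zero (vu_pos hu.ne' z)
      (sq_vu_sub_sq_lt hu.ne' (pow_le_one₀ hu.le hu1) z) hg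
    exact ContinuousLinearMap.prod_surjective_of_exists (e₁ := (1, 0, 0)) (e₂ := (0, 0, 1))
      (by rwa [fderiv_Fu_apply_x (w := (x, y, z)) hd]) (by simp) (by simp)
  · exact ContinuousLinearMap.prod_surjective_of_exists (e₁ := (0, 1, 0)) (e₂ := (0, 0, 1))
      (by simpa [fderiv_Fu_apply_y] using hy) (by simp) (by simp)

def scaledCircle (r : ℝ → ℝ) : Set (ℝ × ℝ) := {p | p.2 ^ 2 = (1 - p.1 ^ 2) * r p.1}

def scaledCircleHomeomorph {r : ℝ → ℝ} (hr : Continuous r) (hpos : ∀ c, 0 < r c) :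
    scaledCircle r ≃ₜ circleS where
  toFun p := ⟨(p.1.1, p.1.2 / √(r p.1.1)), by
    have hp : p.1.2 ^ 2 = (1 - p.1.1 ^ 2) * r p.1.1 := p.2
    simp only [circleS, mem_ofPred_eq, div_pow, Real.sq_sqrt (hpos _).le, hp,
      mul_div_cancel_right₀ _ (hpos _).ne']
    ring⟩
  invFun p := ⟨(p.1.1, p.1.2 * √(r p.1.1)), by
    have hp : p.1.1 ^ 2 + p.1.2 ^ 2 = 1 := p.2
    simp only [scaledCircle, mem_ofPred_eq, mul_pow, Real.sq_sqrt (hpos _).le]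
    rw [← hp]
    ring⟩
  left_inv p := Subtype.ext (Prod.ext rfl (div_mul_cancel₀ _ (Real.sqrt_ne_zero'.2 (hpos _))))
  right_inv p :=
    Subtype.ext (Prod.ext rfl (mul_div_cancel_right₀ _ (Real.sqrt_ne_zero'.2 (hpos _))))
  continuous_toFun := by
    fun_prop (disch := intro; exact (Real.sqrt_pos.2 (hpos _)).ne')
  continuous_invFun := by fun_prop

/-- Affine reparametrisation sending `c = -1, 1` to the two roots `-1/u²`, `(u²+1)/u²` of
`g_u(·, 0)`; `fiberC` is its inverse. -/
def fiberX (u c : ℝ) : ℝ := 1 / 2 + (u ^ 2 + 2) * c / (2 * u ^ 2)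

def fiberC (u x : ℝ) : ℝ := (2 * x - 1) * u ^ 2 / (u ^ 2 + 2)

def fiberWeight (u c : ℝ) : ℝ :=
  (u ^ 2 + 2) ^ 2 / (4 * (u ^ 2 + 1)) * (fiberX u c ^ 2 + (vu u 0 - u ^ 2) * fiberX u c + 1)

lemma fiberX_fiberC {u : ℝ} (hu : u ≠ 0) (x : ℝ) : fiberX u (fiberC u x) = x := by
  unfold fiberX fiberC; field_simp; ring

lemma fiberC_fiberX {u : ℝ} (hu : u ≠ 0) (c : ℝ) : fiberC u (fiberX u c) = c := by
  unfold fiberX fiberC; field_simp; ring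

lemma gu_fiberX_zero {u : ℝ} (hu : u ≠ 0) (c : ℝ) :
    gu u (fiberX u c) 0 = -((1 - c ^ 2) * fiberWeight u c) := by
  simp only [gu_eq_g_vu, g, fiberWeight, vu, fiberX]
  field_simp
  ring

lemma continuous_fiberWeight (u : ℝ) : Continuous (fiberWeight u) := by
  unfold fiberWeight fiberX; fun_prop

lemma fiberWeight_pos {u : ℝ} (hu : 0 < u) (hu1 : u ≤ 1) (c : ℝ) : 0 < fiberWeight u c :=
  mul_pos (by positivity)
    (sq_add_mul_add_one_pos (sq_vu_sub_sq_lt hu.ne' (pow_le_one₀ hu.le hu1) 0) _)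

lemma mem_scaledCircle_fiberWeight_iff {u : ℝ} (hu : u ≠ 0) (x y : ℝ) :
    (fiberC u x, y) ∈ scaledCircle (fiberWeight u) ↔ y ^ 2 + gu u x 0 = 0 := by
  conv_rhs => rw [← fiberX_fiberC hu x, gu_fiberX_zero hu]
  simp only [scaledCircle, mem_ofPred_eq]
  constructor <;> intro h <;> linarith

def fiberHomeomorph {u : ℝ} (hu : u ≠ 0) :
    {w : ℝ × ℝ × ℝ | w ∈ Xu u ∧ w.2.2 = 0} ≃ₜ scaledCircle (fiberWeight u) where
  toFun w := ⟨(fiberC u w.1.1, w.1.2.1), by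
    obtain ⟨⟨x, y, z⟩, hw, rfl : z = 0⟩ := w
    exact (mem_scaledCircle_fiberWeight_iff hu x y).2 hw⟩
  invFun p := ⟨(fiberX u p.1.1, p.1.2, 0), by
    obtain ⟨⟨c, y⟩, hp⟩ := p
    refine ⟨(mem_scaledCircle_fiberWeight_iff hu _ y).1 ?_, rfl⟩
    rwa [fiberC_fiberX hu]⟩
  left_inv w := by
    obtain ⟨⟨x, y, z⟩, hw, rfl : z = 0⟩ := w
    exact Subtype.ext (Prod.ext (fiberX_fiberC hu x) rfl)
  right_inv p := Subtype.ext (Prod.ext (fiberC_fiberX hu p.1.1) rfl)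
  continuous_toFun := by unfold fiberC; fun_prop
  continuous_invFun := by unfold fiberX; fun_prop

/-- From the proof of Claim 3 of Section 5: for `0 < u ≤ 1`, the map `q_u` is a proper
surjective submersion on `X_u`, and its fiber `q_u⁻¹(0)` is homeomorphic to `S¹`. -/
theorem qu_proper_surjective_submersion_circle_fiber :
    ∀ u : ℝ, 0 < u → u ≤ 1 →
      (Continuous (qu u) ∧ ∀ K : Set ℝ, IsCompact K → IsCompact (qu u ⁻¹' K)) ∧
      Function.Surjective (qu u) ∧
      (∀ w ∈ Xu u, Function.Surjective (fderiv ℝ (Ψu u) w)) ∧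
      Nonempty (↥{w : ℝ × ℝ × ℝ | w ∈ Xu u ∧ w.2.2 = 0} ≃ₜ ↥circleS) := by
  intro u hu hu1
  refine ⟨⟨continuous_subtype_val.snd.snd, fun K hK => isCompact_preimage_qu hu hu1 hK⟩,
    qu_surjective u, fun w hw => surjective_fderiv_Ψu hu hu1 hw, ?_⟩
  exact ⟨(fiberHomeomorph hu.ne').trans
    (scaledCircleHomeomorph (continuous_fiberWeight u) (fiberWeight_pos hu hu1))⟩
end
end
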